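/- arXiv:2512.03377 — 4 statements merged into one kernel-verified Lean document; each statement's English description precedes it below -/
import Mathlib

section
/- Let A be an n×n matrix with strictly positive entries whose rows each sum to 1, and suppose the entrywise logarithm log A has rank at most d_k. Then there exist matrices Q, K ∈ ℝ^{n×d_k} such that softmax(QKᵀ/√d_k) = A, where softmax is applied row-wise. -/
noncomputable def rowSoftmax {n : ℕ} (M : Matrix (Fin n) (Fin n) ℝ) :
    Matrix (Fin n) (Fin n) ℝ :=
  Matrix.of fun i j => Real.exp (M i j) / ∑ k, Real.exp (M i k)

/-! Since every row of `A` sums to one, `rowSoftmax (log A) = A`; it therefore suffices to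
write `log A = Q Kᵀ` with `Q K` of width `d_k` (a rank factorization) and then rescale `Q`
by `√d_k`. -/

open Matrix

/-- The column space of `M` embeds into `K^r`; a left inverse of the embedding factors `M`
through `K^r`. -/
theorem Matrix.exists_mul_eq_of_rank_le {K m n : Type*} [Field K] [Fintype m] [Fintype n]
    (M : Matrix m n K) {r : ℕ} (h : M.rank ≤ r) :
    ∃ (Q : Matrix m (Fin r) K) (P : Matrix (Fin r) n K), Q * P = M := by
  classical
  obtain ⟨ι, hι⟩ := (finrank_le_iff_exists_linearMap (R := K)
    (M := LinearMap.range M.mulVecLin) (M' := Fin r → K)).1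
    (h.trans_eq (Module.finrank_fin_fun K).symm)
  obtain ⟨π, hπ⟩ := ι.exists_leftInverse_of_injective (LinearMap.ker_eq_bot.2 hι)
  refine ⟨LinearMap.toMatrix' ((LinearMap.range M.mulVecLin).subtype ∘ₗ π),
    LinearMap.toMatrix' (ι ∘ₗ M.mulVecLin.rangeRestrict), ?_⟩
  rw [← LinearMap.toMatrix'_comp, LinearMap.comp_assoc, ← LinearMap.comp_assoc _ ι, hπ,
    LinearMap.id_comp]
  exact LinearMap.toMatrix'_toLin' M

theorem rowSoftmax_map_log {n : ℕ} {A : Matrix (Fin n) (Fin n) ℝ} (hpos : ∀ i j, 0 < A i j)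
    (hrow : ∀ i, ∑ j, A i j = 1) : rowSoftmax (A.map Real.log) = A := by
  ext i j
  simp only [rowSoftmax, of_apply, map_apply, Real.exp_log (hpos _ _), hrow, div_one]

/-- If `A` is row stochastic with positive entries and `rank (log A) ≤ d_k`,
then there are `Q K : ℝ^{n×d_k}` with `softmax (Q * Kᵀ / √d_k) = A`. -/
theorem exists_QK_of_rank_log_le {n dk : ℕ} (hdk : 0 < dk)
    (A : Matrix (Fin n) (Fin n) ℝ)
    (hpos : ∀ i j, 0 < A i j) (hrow : ∀ i, ∑ j, A i j = 1)
    (hrank : (A.map Real.log).rank ≤ dk) :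
    ∃ Q K : Matrix (Fin n) (Fin dk) ℝ,
      rowSoftmax (Matrix.of fun i j =>
        (Q * K.transpose) i j / Real.sqrt dk) = A := by
  obtain ⟨Q, P, hQP⟩ := (A.map Real.log).exists_mul_eq_of_rank_le hrank
  have hsqrt : Real.sqrt dk ≠ 0 := Real.sqrt_ne_zero'.2 (Nat.cast_pos.2 hdk)
  refine ⟨Real.sqrt dk • Q, Pᵀ, ?_⟩
  have hlogits :
      (of fun i j => ((Real.sqrt dk • Q) * Pᵀᵀ) i j / Real.sqrt dk) = A.map Real.log := by
    ext i j
    rw [of_apply, transpose_transpose, smul_mul, Matrix.smul_apply, smul_eq_mul,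
      mul_div_cancel_left₀ _ hsqrt, hQP]
  rw [hlogits, rowSoftmax_map_log hpos hrow]
end

section
/- Given N matrices A_1, …, A_N ∈ ℝ^{n×n}, each with strictly positive entries and row sums equal to 1, and each satisfying rank(log A_m) ≤ d_k, and given N distinct inputs X_1, …, X_N ∈ ℝ^{n×d}, there exist functions Q, K : ℝ^{n×d} → ℝ^{n×d_k} such that softmax(Q(X_m) K(X_m)ᵀ / √d_k) = A_m for all m = 1, …, N. -/
lemma exists_factorization {n dk : ℕ} (M : Matrix (Fin n) (Fin n) ℝ) (h : M.rank ≤ dk) :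
    ∃ (B : Matrix (Fin n) (Fin dk) ℝ) (C : Matrix (Fin dk) (Fin n) ℝ), M = B * C := by
  classical
  set V := LinearMap.range M.mulVecLin with hV
  have hr : Module.finrank ℝ V ≤ dk := h
  let b := Module.finBasis ℝ V
  have hr' : Module.finrank ℝ V = Module.finrank ℝ V := rfl
  -- projection (Fin dk → ℝ) → (Fin (finrank V) → ℝ)
  let π : (Fin dk → ℝ) →ₗ[ℝ] (Fin (Module.finrank ℝ V) → ℝ) :=
    LinearMap.funLeft ℝ ℝ (Fin.castLE hr)
  have hπ : Function.Surjective π :=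
    LinearMap.funLeft_surjective_of_injective ℝ ℝ _ (Fin.castLE_injective hr)
  let φ : (Fin dk → ℝ) →ₗ[ℝ] (Fin n → ℝ) :=
    V.subtype ∘ₗ (b.equivFun.symm : (Fin (Module.finrank ℝ V) → ℝ) →ₗ[ℝ] V) ∘ₗ π
  have hrange : ∀ v : Fin n → ℝ, v ∈ V → ∃ c, φ c = v := by
    intro v hv
    obtain ⟨w, hw⟩ := hπ (b.equivFun ⟨v, hv⟩)
    refine ⟨w, ?_⟩
    have : φ w = V.subtype (b.equivFun.symm (π w)) := rfl
    rw [this, hw, b.equivFun.symm_apply_apply]; rfl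
  have hcol : ∀ j : Fin n, (fun i => M i j) ∈ V := by
    intro j
    refine ⟨Pi.single j 1, ?_⟩
    ext i
    simp [Matrix.mulVecLin, Matrix.mulVec_single]
  choose c hc using fun j => hrange _ (hcol j)
  refine ⟨Matrix.of fun i k => φ (Pi.single k 1) i, Matrix.of fun k j => c j k, ?_⟩
  ext i j
  have : φ (c j) i = M i j := congrFun (hc j) i
  rw [← this]
  have hdecomp : c j = ∑ k : Fin dk, c j k • (Pi.single k 1 : Fin dk → ℝ) := by
    ext k'
    simp [Pi.single_apply, Finset.sum_ite_eq', mul_comm]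
  rw [hdecomp]
  simp [Matrix.mul_apply, Finset.sum_apply, mul_comm]

lemma rowSoftmax_log {n : ℕ} (A : Matrix (Fin n) (Fin n) ℝ)
    (hpos : ∀ i j, 0 < A i j) (hrow : ∀ i, ∑ j, A i j = 1) :
    rowSoftmax (A.map Real.log) = A := by
  ext i j
  have he : ∀ k, Real.exp (A.map Real.log i k) = A i k := fun k =>
    Real.exp_log (hpos i k)
  simp only [rowSoftmax, Matrix.of_apply, he, hrow i, div_one]

/-- Given `N` row-stochastic positive matrices `A m` with `rank (log (A m)) ≤ d_k`,
and `N` pairwise distinct inputs `X m`, there exist (arbitrary) mappings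
`Q K : ℝ^{n×d} → ℝ^{n×d_k}` realizing each `A m` via scaled softmax attention. -/
theorem exists_QK_maps {n d dk N : ℕ} (hdk : 0 < dk)
    (A : Fin N → Matrix (Fin n) (Fin n) ℝ)
    (X : Fin N → Matrix (Fin n) (Fin d) ℝ)
    (hX : Function.Injective X)
    (hpos : ∀ m i j, 0 < A m i j)
    (hrow : ∀ m i, ∑ j, A m i j = 1)
    (hrank : ∀ m, ((A m).map Real.log).rank ≤ dk) :
    ∃ Q K : Matrix (Fin n) (Fin d) ℝ → Matrix (Fin n) (Fin dk) ℝ,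
      ∀ m, rowSoftmax (Matrix.of fun i j =>
        (Q (X m) * (K (X m)).transpose) i j / Real.sqrt dk) = A m := by
  classical
  choose B C hBC using fun m => exists_factorization ((A m).map Real.log) (hrank m)
  refine ⟨fun x => if h : ∃ m, X m = x then Real.sqrt dk • B h.choose else 0,
    fun x => if h : ∃ m, X m = x then (C h.choose).transpose else 0, fun m => ?_⟩
  have hex : ∃ m', X m' = X m := ⟨m, rfl⟩
  have hm : hex.choose = m := hX hex.choose_spec
  have hs : (0:ℝ) < Real.sqrt dk := Real.sqrt_pos.mpr (by exact_mod_cast hdk)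
  have : (Matrix.of fun i j =>
      ((if h : ∃ m', X m' = X m then Real.sqrt dk • B h.choose else 0) *
        ((if h : ∃ m', X m' = X m then (C h.choose).transpose else 0).transpose)) i j / Real.sqrt dk)
      = (A m).map Real.log := by
    ext i j
    simp only [dif_pos hex, hm, Matrix.of_apply, Matrix.transpose_transpose,
      Matrix.smul_mul, Matrix.smul_apply, smul_eq_mul]
    rw [mul_div_cancel_left₀ _ hs.ne', ← hBC m]
  rw [this, rowSoftmax_log (A m) (hpos m) (hrow m)]
end

section
/- Let X ∈ ℝ^{n×d} and let a ∈ ℝ^n be a vector not in span(Col(X) ∪ {𝟙}). Define A ∈ ℝ^{n×n} by A_{ij} = exp(a_j). Then there do not exist matrices W_q ∈ ℝ^{d×d_k}, W_k ∈ ℝ^{d×d_k} such that softmax((XW_q)(XW_k)ᵀ/√d_k) = A, where softmax is row-wise. -/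
/-- If `a` lies outside `span(Col(X) ∪ {𝟙})` and `A i j = exp (a j)`, then no
linear projections `W_q, W_k` can represent `A` via scaled softmax attention. -/
theorem no_linear_attention_repr {n d dk : ℕ} (hdk : 0 < dk)
    (X : Matrix (Fin n) (Fin d) ℝ) (a : Fin n → ℝ)
    (ha : a ∉ Submodule.span ℝ
      (Set.range X.transpose ∪ {(fun _ => (1 : ℝ) : Fin n → ℝ)}))
    (A : Matrix (Fin n) (Fin n) ℝ) (hA : ∀ i j, A i j = Real.exp (a j)) :
    ¬ ∃ Wq Wk : Matrix (Fin d) (Fin dk) ℝ,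
      rowSoftmax (Matrix.of fun i j =>
        ((X * Wq) * (X * Wk).transpose) i j / Real.sqrt dk) = A := by
  rintro ⟨Wq, Wk, hEq⟩
  apply ha
  rcases Nat.eq_zero_or_pos n with hn | hn
  · subst hn
    have h0 : a = 0 := funext fun j => j.elim0
    rw [h0]; exact Submodule.zero_mem _
  have : Nonempty (Fin n) := ⟨⟨0, hn⟩⟩
  set i : Fin n := ⟨0, hn⟩
  set S : Fin n → Fin n → ℝ := fun i j =>
    ((X * Wq) * (X * Wk).transpose) i j / Real.sqrt dk with hSdef
  have hSum : (0 : ℝ) < ∑ k, Real.exp (S i k) :=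
    Finset.sum_pos (fun k _ => Real.exp_pos _) Finset.univ_nonempty
  have key : ∀ j, Real.exp (S i j) / (∑ k, Real.exp (S i k)) = Real.exp (a j) := by
    intro j
    have := congrFun (congrFun hEq i) j
    simpa [rowSoftmax, hA i j] using this
  have haj : ∀ j, a j = S i j - Real.log (∑ k, Real.exp (S i k)) := by
    intro j
    have h1 := congrArg Real.log (key j)
    rw [Real.log_div (ne_of_gt (Real.exp_pos _)) (ne_of_gt hSum),
      Real.log_exp, Real.log_exp] at h1
    exact h1.symm
  set c : Fin d → ℝ := fun p => (∑ m, (X * Wq) i m * Wk p m) / Real.sqrt dk with hc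
  have hdecomp : a = (∑ p, c p • X.transpose p)
      + (-Real.log (∑ k, Real.exp (S i k))) • (fun _ => (1 : ℝ) : Fin n → ℝ) := by
    funext j
    rw [haj j]
    simp only [Pi.add_apply, Pi.smul_apply, Finset.sum_apply, smul_eq_mul,
      Matrix.transpose_apply]
    have hS : S i j = ∑ p, c p * X j p := by
      simp only [hSdef, hc, Matrix.mul_apply, Matrix.transpose_apply,
        Finset.sum_div, Finset.mul_sum, div_eq_mul_inv, Finset.sum_mul]
      rw [Finset.sum_comm]
      apply Finset.sum_congr rfl
      intro p _
      apply Finset.sum_congr rfl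
      intro m _
      apply Finset.sum_congr rfl
      intro q _
      ring
    rw [hS]
    ring
  rw [hdecomp]
  apply Submodule.add_mem
  · exact Submodule.sum_mem _ fun p _ => Submodule.smul_mem _ _
      (Submodule.subset_span (Or.inl ⟨p, rfl⟩))
  · exact Submodule.smul_mem _ _ (Submodule.subset_span (Or.inr rfl))
end

section
/- If d < n − 1, then for every X ∈ ℝ^{n×d} there exists a row stochastic matrix A ∈ ℝ^{n×n} (depending on X) with strictly positive entries and rank(log A) = 1 such that the standard linear attention cannot represent A: there are no W_q, W_k ∈ ℝ^{d×d_k} with softmax((XW_q)(XW_k)ᵀ/√d_k) = A. -/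
/-- Linear Bottleneck, part (2): if `d < n - 1`, then for every input `X` there
is a positive row-stochastic matrix `A` with `rank (log A) = 1` that no linear
attention `softmax((XW_q)(XW_k)ᵀ/√d_k)` can represent. -/
theorem linear_bottleneck {n d dk : ℕ} (hdk : 0 < dk) (hd : d < n - 1) :
    ∀ X : Matrix (Fin n) (Fin d) ℝ,
      ∃ A : Matrix (Fin n) (Fin n) ℝ,
        (∀ i j, 0 < A i j) ∧ (∀ i, ∑ j, A i j = 1) ∧
        (A.map Real.log).rank = 1 ∧
        ¬ ∃ Wq Wk : Matrix (Fin d) (Fin dk) ℝ,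
          rowSoftmax (Matrix.of fun i j =>
            ((X * Wq) * (X * Wk).transpose) i j / Real.sqrt dk) = A := by
  intro X
  have hn : d + 1 < n := by omega
  have hn0 : 0 < n := by omega
  -- the family: constant-one vector together with the columns of X
  set v : Fin (d + 1) → (Fin n → ℝ) :=
    fun l => Fin.cases (fun _ => (1 : ℝ)) (fun l' => fun i => X i l') l with hv
  set S : Submodule ℝ (Fin n → ℝ) := Submodule.span ℝ (Set.range v) with hSdef
  -- S is a proper subspace
  have hStop : S ≠ ⊤ := by
    intro htop
    have := finrank_le_of_span_eq_top htop
    simp [Module.finrank_pi, Fintype.card_fin] at this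
    omega
  obtain ⟨a, ha⟩ : ∃ a : Fin n → ℝ, a ∉ S := by
    by_contra h
    push_neg at h
    exact hStop (Submodule.eq_top_iff'.mpr h)
  set Z : ℝ := ∑ j, Real.exp (a j) with hZdef
  have hZpos : 0 < Z := Finset.sum_pos (fun j _ => Real.exp_pos _) ⟨⟨0, hn0⟩, Finset.mem_univ _⟩
  refine ⟨Matrix.of fun _ j => Real.exp (a j) / Z, ?_, ?_, ?_, ?_⟩
  · intro i j
    exact div_pos (Real.exp_pos _) hZpos
  · intro i
    simp only [Matrix.of_apply]
    rw [← Finset.sum_div, ← hZdef, div_self (ne_of_gt hZpos)]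
  · -- rank of the log matrix is 1
    have hlog : ∀ j, Real.log (Real.exp (a j) / Z) = a j - Real.log Z := by
      intro j
      rw [Real.log_div (Real.exp_ne_zero _) (ne_of_gt hZpos), Real.log_exp]
    set L : Matrix (Fin n) (Fin n) ℝ := (Matrix.of fun _ j => Real.exp (a j) / Z).map Real.log
      with hLdef
    have hL : ∀ i j, L i j = a j - Real.log Z := fun i j => hlog j
    -- a is not constant
    have hnc : ∃ j, a j ≠ Real.log Z := by
      by_contra h
      push_neg at h
      apply ha
      have : a = Real.log Z • v 0 := by
        funext i; simp [hv, h i]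
      rw [this]
      exact S.smul_mem _ (Submodule.subset_span ⟨0, rfl⟩)
    obtain ⟨j0, hj0⟩ := hnc
    -- upper bound: range of mulVecLin lies in span of the constant vector
    have hle : LinearMap.range L.mulVecLin ≤ Submodule.span ℝ {(fun _ => (1:ℝ) : Fin n → ℝ)} := by
      rintro y ⟨x, rfl⟩
      have : L.mulVecLin x = (∑ j, (a j - Real.log Z) * x j) • (fun _ => (1:ℝ)) := by
        funext i
        simp only [Matrix.mulVecLin_apply, Matrix.mulVec, dotProduct, Pi.smul_apply,
          smul_eq_mul, mul_one]
        exact Finset.sum_congr rfl (fun j _ => by rw [hL])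
      rw [this]
      exact Submodule.smul_mem _ _ (Submodule.mem_span_singleton_self _)
    have hrank_le : L.rank ≤ 1 := by
      have h1 : Module.finrank ℝ (Submodule.span ℝ {(fun _ => (1:ℝ) : Fin n → ℝ)}) = 1 := by
        apply finrank_span_singleton
        intro h
        have := congrFun h ⟨0, hn0⟩
        norm_num at this
      calc L.rank ≤ Module.finrank ℝ (Submodule.span ℝ {(fun _ => (1:ℝ) : Fin n → ℝ)}) :=
            Submodule.finrank_mono hle
        _ = 1 := h1
    have hrank_pos : 0 < L.rank := by
      rw [Matrix.rank]
      rw [Module.finrank_pos_iff]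
      refine ⟨⟨⟨L.mulVecLin (Pi.single j0 1), ⟨_, rfl⟩⟩, 0, ?_⟩⟩
      intro h
      have h2 : L.mulVecLin (Pi.single j0 1) = 0 := by
        simpa using congrArg Subtype.val h
      have h3 := congrFun h2 ⟨0, hn0⟩
      simp only [Matrix.mulVecLin_apply, Matrix.mulVec, dotProduct, Pi.zero_apply] at h3
      rw [Finset.sum_eq_single j0] at h3
      · rw [hL, Pi.single_eq_same, mul_one, sub_eq_zero] at h3
        exact hj0 h3
      · intro b _ hb
        rw [Pi.single_eq_of_ne hb, mul_zero]
      · intro h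
        exact absurd (Finset.mem_univ j0) h
    omega
  · -- non-representability
    rintro ⟨Wq, Wk, hRep⟩
    apply ha
    set i0 : Fin n := ⟨0, hn0⟩
    set B : Fin n → ℝ :=
      fun j => ((X * Wq) * (X * Wk).transpose) i0 j / Real.sqrt dk with hBdef
    set T : ℝ := ∑ k, Real.exp (B k) with hTdef
    have hTpos : 0 < T := Finset.sum_pos (fun j _ => Real.exp_pos _) ⟨i0, Finset.mem_univ _⟩
    have key : ∀ j, a j = B j - Real.log T + Real.log Z := by
      intro j
      have h1 : Real.exp (B j) / T = Real.exp (a j) / Z := by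
        have := congrFun (congrFun hRep i0) j
        simpa [rowSoftmax, hBdef, hTdef] using this
      have h2 := congrArg Real.log h1
      rw [Real.log_div (Real.exp_ne_zero _) (ne_of_gt hTpos),
        Real.log_div (Real.exp_ne_zero _) (ne_of_gt hZpos),
        Real.log_exp, Real.log_exp] at h2
      linarith
    -- B is a linear combination of the columns of X
    set c : Fin d → ℝ := fun m => (∑ l, Wk m l * (X * Wq) i0 l) / Real.sqrt dk with hcdef
    have hB : ∀ j, B j = ∑ m, c m * X j m := by
      intro j
      simp only [hBdef, hcdef, Matrix.mul_apply, Matrix.transpose_apply, Finset.mul_sum,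
        Finset.sum_mul, Finset.sum_div, div_mul_eq_mul_div]
      rw [Finset.sum_comm]
      refine Finset.sum_congr rfl fun m _ => Finset.sum_congr rfl fun l _ => ?_
      exact Finset.sum_congr rfl fun p _ => by ring
    have haeq : a = (Real.log Z - Real.log T) • v 0 + ∑ m : Fin d, c m • v m.succ := by
      funext j
      simp only [Pi.add_apply, Pi.smul_apply, smul_eq_mul, Finset.sum_apply, hv]
      rw [key j, hB j]
      simp only [Fin.cases_zero, Fin.cases_succ, mul_one]
      ring
    rw [haeq]
    refine S.add_mem (S.smul_mem _ (Submodule.subset_span ⟨0, rfl⟩)) ?_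
    exact Submodule.sum_mem _ (fun m _ => S.smul_mem _ (Submodule.subset_span ⟨m.succ, rfl⟩))
end
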